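/- Let 𝔸 be a unital real Banach algebra and i_1,…,i_d ∈ 𝔸 with i_l² = −1 for every l. For reals ρ_1,…,ρ_d and σ_1,…,σ_d set a_l = ρ_l·i_l and b_l = σ_l·i_l (so a_l and b_l are colinear, hence commute). Then the product of exponentials of sums splits as follows: ∏_{l=1}^{d} exp(−(a_l+b_l)) = Σ_{j∈{0,1}^d} Σ_{J} (∏_{l=1}^{d} [exp(−a_l)]_{c^{(J)_l}(←(i_1,…,i_{l−1}))}) · (∏_{l=1}^{d} exp(−(−1)^{j_l} b_l)), where J runs over the strictly lower triangular matrices in {0,1}^{d×d} whose rows sum componentwise mod 2 to j, and (J)_l denotes the first l−1 entries of the l-th row of J; alternatively, with J running over strictly upper triangular matrices with the same row-sum condition, ∏_{l=1}^{d} exp(−(a_l+b_l)) = Σ_{j∈{0,1}^d} Σ_{J} (∏_{l=1}^{d} exp(−(−1)^{j_l} a_l)) · (∏_{l=1}^{d} [exp(−b_l)]_{c^{(J)_l}(→(i_{l+1},…,i_d))}), where now (J)_l denotes the entries l+1,…,d of the l-th row. All products over l are taken in increasing order of l. -/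

import Mathlib

noncomputable section

variable {𝔸 : Type*}

/-- The commutative (`s = 0`) and anticommutative (`s = 1`) part of `A` with respect to an
invertible element `B`: `A_{c^s(B)} = ½(A + (−1)^s B⁻¹AB)`. -/
def cPart [Ring 𝔸] [Algebra ℝ 𝔸] (B : 𝔸) (s : Fin 2) (A : 𝔸) : 𝔸 :=
  (2 : ℝ)⁻¹ • (A + (-1 : 𝔸) ^ (s : ℕ) * (Ring.inverse B * A * B))

/-- The forward iterated decomposition `A_{c^m(→B)}`, applying the first list entry first. -/
def cFwd [Ring 𝔸] [Algebra ℝ 𝔸] (L : List (𝔸 × Fin 2)) (A : 𝔸) : 𝔸 :=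
  L.foldl (fun acc p => cPart p.1 p.2 acc) A

/-- The backward iterated decomposition `A_{c^m(←B)}`, applying the last list entry first. -/
def cBwd [Ring 𝔸] [Algebra ℝ 𝔸] (L : List (𝔸 × Fin 2)) (A : 𝔸) : 𝔸 :=
  L.foldr (fun p acc => cPart p.1 p.2 acc) A

/-- The ordered product `g 0 * g 1 * ⋯ * g (d−1)`, factors in increasing order of the index. -/
def oprod [Monoid 𝔸] {d : ℕ} (g : Fin d → 𝔸) : 𝔸 :=
  (List.ofFn g).prod

/-! If `i ^ 2 = -1` then `i⁻¹ = -i`, so `A_{c^s(i)} = ½(A - (-1)^s i A i)` and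
`i * A_{c^s(i)} = A_{c^s(i)} * ((-1)^s i)`: the part `s = 0` of `A` commutes with `i`, the part
`s = 1` anticommutes with it. Hence `exp(-σ i) * A = ∑ₛ A_{c^s(i)} * exp(-(-1)^s σ i)`, and
iterating, a product of such exponentials can be moved past `A` at the price of splitting `A`
along the `i`'s and flipping some of the signs.

Write `exp(-(a_l + b_l)) = exp(-a_l) exp(-b_l)` and move every `exp(-b_k)` to the right past the
`exp(-a_l)` with `l > k` (respectively every `exp(-a_k)` to the left past the `exp(-b_l)` with
`l < k`). The choice `s` made when the factors with indices `k` and `l` cross is the entry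
`J l k` of a strictly lower (respectively upper) triangular `0/1` matrix, and the sign finally
carried by `b_k` (respectively `a_k`) is `(-1)` to the `k`-th column sum of `J`. Grouping the
matrices by the parity `j` of their column sums gives the theorem. -/

open NormedSpace Finset

lemma Ring.inverse_eq_neg_of_sq_eq_neg_one {R : Type*} [Ring R] {i : R} (hi : i ^ 2 = -1) :
    Ring.inverse i = -i :=
  Ring.inverse_unit ⟨i, -i, by rw [mul_neg, ← sq, hi, neg_neg], by rw [neg_mul, ← sq, hi, neg_neg]⟩

section CPart

variable [Ring 𝔸] [Algebra ℝ 𝔸] {i : 𝔸}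

lemma cPart_zero_add_cPart_one (B A : 𝔸) : cPart B 0 A + cPart B 1 A = A := by
  simp only [cPart, Fin.val_zero, Fin.val_one, pow_zero, pow_one, one_mul, neg_one_mul, ← smul_add]
  rw [add_add_add_comm, add_neg_cancel, add_zero, ← two_smul ℝ, smul_smul]
  norm_num

lemma semiconjBy_cPart (hi : i ^ 2 = -1) (s : Fin 2) (A : 𝔸) :
    SemiconjBy (cPart i s A) ((-1 : ℝ) ^ (s : ℕ) • i) i := by
  have hii : i * i = -1 := by rw [← sq, hi]
  have hiiX : ∀ X : 𝔸, i * (i * X) = -X := fun X => by rw [← mul_assoc, hii, neg_one_mul]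
  rw [SemiconjBy, cPart, Ring.inverse_eq_neg_of_sq_eq_neg_one hi]
  fin_cases s <;> simp [mul_add, add_mul, mul_assoc, hii, hiiX, add_comm]

lemma semiconjBy_cPart' (hi : i ^ 2 = -1) (s : Fin 2) (A : 𝔸) :
    SemiconjBy (cPart i s A) i ((-1 : ℝ) ^ (s : ℕ) • i) := by
  have h := (semiconjBy_cPart hi s A).smul_right ((-1 : ℝ) ^ (s : ℕ))
  rwa [smul_smul, ← pow_add, ← two_mul, pow_mul, neg_one_sq, one_pow, one_smul] at h

end CPart

section OrderedProduct

variable {M : Type*} [Monoid M]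

lemma oprod_succ {n : ℕ} (g : Fin (n + 1) → M) : oprod g = g 0 * oprod fun k => g k.succ := by
  rw [oprod, List.ofFn_succ, List.prod_cons, oprod]

lemma oprod_castSucc {n : ℕ} (g : Fin (n + 1) → M) :
    oprod g = (oprod fun k => g k.castSucc) * g (Fin.last n) := by
  rw [oprod, List.ofFn_succ', List.prod_concat, oprod]

end OrderedProduct

def strictLowerTriangular (d : ℕ) : Finset (Fin d → Fin d → Fin 2) :=
  univ.filter fun J => ∀ l k, l ≤ k → J l k = 0

lemma mem_strictLowerTriangular {d : ℕ} {J : Fin d → Fin d → Fin 2} :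
    J ∈ strictLowerTriangular d ↔ ∀ l k, l ≤ k → J l k = 0 := by
  simp [strictLowerTriangular]

def addLastRow {n : ℕ} (J : Fin n → Fin n → Fin 2) (m : Fin n → Fin 2) :
    Fin (n + 1) → Fin (n + 1) → Fin 2 :=
  Fin.snoc (fun l => Fin.snoc (J l) 0) (Fin.snoc m 0)

lemma sum_strictLowerTriangular_succ {M : Type*} [AddCommMonoid M] {n : ℕ}
    (f : (Fin (n + 1) → Fin (n + 1) → Fin 2) → M) :
    ∑ J ∈ strictLowerTriangular (n + 1), f J =
      ∑ J ∈ strictLowerTriangular n, ∑ m : Fin n → Fin 2,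
        f (addLastRow J m) := by
  have hsnoc : ∀ J ∈ strictLowerTriangular (n + 1),
      addLastRow (fun l k => J l.castSucc k.castSucc) (fun k => J (.last n) k.castSucc) = J := by
    intro J hJ
    ext l k : 2
    induction l using Fin.lastCases <;> induction k using Fin.lastCases <;>
      simp [addLastRow, mem_strictLowerTriangular.mp hJ _ _ (Fin.le_last _)]
  rw [← sum_product']
  refine sum_nbij' (fun J => (fun l k => J l.castSucc k.castSucc, fun k => J (.last n) k.castSucc))
    (fun p => addLastRow p.1 p.2) ?_ ?_ hsnoc (by simp [addLastRow]) ?_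
  · simp +contextual [mem_strictLowerTriangular]
  · rintro ⟨J, m⟩ hJ
    simp only [mem_product, mem_strictLowerTriangular] at hJ ⊢
    intro l k hlk
    induction l using Fin.lastCases <;> induction k using Fin.lastCases <;> simp_all [addLastRow]
  · exact fun J hJ => congrArg f (hsnoc J hJ).symm

lemma List.filter_finRange_lt_castSucc {n : ℕ} (l : Fin n) :
    (List.finRange (n + 1)).filter (fun k => k < l.castSucc) =
      ((List.finRange n).filter (fun k => k < l)).map Fin.castSucc := by
  simp [List.finRange_succ_last, List.filter_map, Function.comp_def, Fin.le_last]

lemma List.filter_finRange_lt_last {n : ℕ} :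
    (List.finRange (n + 1)).filter (fun k => k < Fin.last n) =
      (List.finRange n).map Fin.castSucc := by
  simp [List.finRange_succ_last, List.filter_map, Function.comp_def, Fin.castSucc_lt_last]

def strictUpperTriangular (d : ℕ) : Finset (Fin d → Fin d → Fin 2) :=
  univ.filter fun J => ∀ l k, k ≤ l → J l k = 0

lemma mem_strictUpperTriangular {d : ℕ} {J : Fin d → Fin d → Fin 2} :
    J ∈ strictUpperTriangular d ↔ ∀ l k, k ≤ l → J l k = 0 := by
  simp [strictUpperTriangular]

def addFirstRow {n : ℕ} (J : Fin n → Fin n → Fin 2) (m : Fin n → Fin 2) :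
    Fin (n + 1) → Fin (n + 1) → Fin 2 :=
  Fin.cons (Fin.cons 0 m) (fun l => Fin.cons 0 (J l))

lemma sum_strictUpperTriangular_succ {M : Type*} [AddCommMonoid M] {n : ℕ}
    (f : (Fin (n + 1) → Fin (n + 1) → Fin 2) → M) :
    ∑ J ∈ strictUpperTriangular (n + 1), f J =
      ∑ J ∈ strictUpperTriangular n, ∑ m : Fin n → Fin 2, f (addFirstRow J m) := by
  have hcons : ∀ J ∈ strictUpperTriangular (n + 1),
      addFirstRow (fun l k => J l.succ k.succ) (fun k => J 0 k.succ) = J := by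
    intro J hJ
    ext l k : 2
    induction l using Fin.cases <;> induction k using Fin.cases <;>
      simp [addFirstRow, mem_strictUpperTriangular.mp hJ _ _ (Fin.zero_le _)]
  rw [← sum_product']
  refine sum_nbij' (fun J => (fun l k => J l.succ k.succ, fun k => J 0 k.succ))
    (fun p => addFirstRow p.1 p.2) ?_ ?_ hcons (by simp [addFirstRow]) ?_
  · simp +contextual [mem_strictUpperTriangular]
  · rintro ⟨J, m⟩ hJ
    simp only [mem_product, mem_strictUpperTriangular] at hJ ⊢
    intro l k hkl
    induction l using Fin.cases <;> induction k using Fin.cases <;> simp_all [addFirstRow]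
  · exact fun J hJ => congrArg f (hcons J hJ).symm

lemma List.filter_finRange_succ_lt {n : ℕ} (l : Fin n) :
    (List.finRange (n + 1)).filter (fun k => l.succ < k) =
      ((List.finRange n).filter (fun k => l < k)).map Fin.succ := by
  simp [List.finRange_succ, List.filter_map, Function.comp_def]

lemma List.filter_finRange_zero_lt {n : ℕ} :
    (List.finRange (n + 1)).filter (fun k => 0 < k) = (List.finRange n).map Fin.succ := by
  simp [List.finRange_succ, List.filter_map, Function.comp_def, Fin.succ_pos]

lemma natCast_zmod_two_eq_iff (a : ℕ) (x : Fin 2) :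
    (a : ZMod 2) = ((x : ℕ) : ZMod 2) ↔ Fin.ofNat 2 a = x := by
  rw [ZMod.natCast_eq_natCast_iff', Fin.ext_iff, Fin.val_ofNat, Nat.mod_eq_of_lt x.isLt]

lemma neg_one_pow_eq_of_natCast_zmod_two_eq {R : Type*} [Ring R] {a b : ℕ}
    (h : (a : ZMod 2) = b) : (-1 : R) ^ a = (-1) ^ b := by
  rw [neg_one_pow_eq_pow_mod_two, (ZMod.natCast_eq_natCast_iff' a b 2).mp h,
    ← neg_one_pow_eq_pow_mod_two]

lemma sum_sum_filter_colParity {M : Type*} [AddCommMonoid M] {d : ℕ}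
    (P : (Fin d → Fin d → Fin 2) → Prop) [DecidablePred P]
    (f : (Fin d → Fin 2) → (Fin d → Fin d → Fin 2) → M) (g : (Fin d → Fin d → Fin 2) → M)
    (hfg : ∀ j J, (∀ c, (∑ l, ((J l c : ℕ) : ZMod 2)) = ((j c : ℕ) : ZMod 2)) → f j J = g J) :
    ∑ j : Fin d → Fin 2, ∑ J ∈ univ.filter
        (fun J => P J ∧ ∀ c, (∑ l, ((J l c : ℕ) : ZMod 2)) = ((j c : ℕ) : ZMod 2)), f j J =
      ∑ J ∈ univ.filter P, g J := by
  have hfiber : ∀ j : Fin d → Fin 2,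
      univ.filter (fun J => P J ∧ ∀ c, (∑ l, ((J l c : ℕ) : ZMod 2)) = ((j c : ℕ) : ZMod 2)) =
        (univ.filter P).filter (fun J => (fun c => Fin.ofNat 2 (∑ l, (J l c : ℕ))) = j) := by
    intro j
    ext J
    simp only [mem_filter, mem_univ, true_and, funext_iff, ← natCast_zmod_two_eq_iff,
      Nat.cast_sum]
  rw [← sum_fiberwise (univ.filter P) (fun J c => Fin.ofNat 2 (∑ l, (J l c : ℕ))) g]
  refine sum_congr rfl fun j _ => ?_
  rw [← hfiber j]
  exact sum_congr rfl fun J hJ => hfg j J (mem_filter.mp hJ).2.2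

section Exp

variable [NormedRing 𝔸] [NormedAlgebra ℝ 𝔸] [CompleteSpace 𝔸]

lemma exp_neg_smul_mul_cPart {i : 𝔸} (hi : i ^ 2 = -1) (σ : ℝ) (s : Fin 2) (A : 𝔸) :
    exp (-(σ • i)) * cPart i s A = cPart i s A * exp (-((-1 : ℝ) ^ (s : ℕ) • σ • i)) := by
  let : NormedAlgebra ℚ 𝔸 := NormedAlgebra.restrictScalars ℚ ℝ 𝔸
  rw [smul_comm]
  exact ((semiconjBy_cPart hi s A).smul_right σ).neg_right.exp_right.eq.symm

lemma cPart_mul_exp_neg_smul {i : 𝔸} (hi : i ^ 2 = -1) (σ : ℝ) (s : Fin 2) (A : 𝔸) :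
    cPart i s A * exp (-(σ • i)) = exp (-((-1 : ℝ) ^ (s : ℕ) • σ • i)) * cPart i s A := by
  let : NormedAlgebra ℚ 𝔸 := NormedAlgebra.restrictScalars ℚ ℝ 𝔸
  rw [smul_comm]
  exact ((semiconjBy_cPart' hi s A).smul_right σ).neg_right.exp_right.eq

lemma exp_neg_smul_mul_eq_sum {i : 𝔸} (hi : i ^ 2 = -1) (σ : ℝ) (A : 𝔸) :
    exp (-(σ • i)) * A = ∑ s : Fin 2, cPart i s A * exp (-((-1 : ℝ) ^ (s : ℕ) • σ • i)) := by
  rw [Fin.sum_univ_two, ← exp_neg_smul_mul_cPart hi, ← exp_neg_smul_mul_cPart hi, ← mul_add,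
    cPart_zero_add_cPart_one]

lemma mul_exp_neg_smul_eq_sum {i : 𝔸} (hi : i ^ 2 = -1) (σ : ℝ) (A : 𝔸) :
    A * exp (-(σ • i)) = ∑ s : Fin 2, exp (-((-1 : ℝ) ^ (s : ℕ) • σ • i)) * cPart i s A := by
  rw [Fin.sum_univ_two, ← cPart_mul_exp_neg_smul hi, ← cPart_mul_exp_neg_smul hi, ← add_mul,
    cPart_zero_add_cPart_one]

lemma exp_add_smul_eq_mul (i : 𝔸) (ρ σ : ℝ) :
    exp (-(ρ • i + σ • i)) = exp (-(ρ • i)) * exp (-(σ • i)) := by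
  let : NormedAlgebra ℚ 𝔸 := NormedAlgebra.restrictScalars ℚ ℝ 𝔸
  rw [neg_add, exp_add_of_commute (((Commute.refl i).smul_left ρ).smul_right σ).neg_left.neg_right]

lemma oprod_exp_mul_eq_sum {n : ℕ} (i : Fin n → 𝔸) (hi : ∀ k, i k ^ 2 = -1) (σ : Fin n → ℝ)
    (A : 𝔸) :
    oprod (fun k => exp (-(σ k • i k))) * A =
      ∑ m : Fin n → Fin 2, cBwd (List.ofFn fun k => (i k, m k)) A *
        oprod fun k => exp (-((-1 : ℝ) ^ (m k : ℕ) • σ k • i k)) := by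
  induction n with
  | zero => simp [oprod, cBwd]
  | succ n ih =>
    rw [oprod_succ, mul_assoc, ih _ (fun k => hi k.succ), mul_sum,
      ← (Fin.consEquiv fun _ => Fin 2).sum_comp, Fintype.sum_prod_type, sum_comm]
    refine sum_congr rfl fun m _ => ?_
    rw [← mul_assoc, exp_neg_smul_mul_eq_sum (hi 0), sum_mul]
    refine sum_congr rfl fun s _ => ?_
    simp [oprod_succ (n := n), List.ofFn_succ, cBwd, mul_assoc]

lemma mul_oprod_exp_eq_sum {n : ℕ} (i : Fin n → 𝔸) (hi : ∀ k, i k ^ 2 = -1) (σ : Fin n → ℝ)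
    (A : 𝔸) :
    A * oprod (fun k => exp (-(σ k • i k))) =
      ∑ m : Fin n → Fin 2, (oprod fun k => exp (-((-1 : ℝ) ^ (m k : ℕ) • σ k • i k))) *
        cFwd (List.ofFn fun k => (i k, m k)) A := by
  induction n generalizing A with
  | zero => simp [oprod, cFwd]
  | succ n ih =>
    rw [oprod_succ, ← mul_assoc, mul_exp_neg_smul_eq_sum (hi 0), sum_mul,
      ← (Fin.consEquiv fun _ => Fin 2).sum_comp, Fintype.sum_prod_type]
    refine sum_congr rfl fun s _ => ?_
    rw [mul_assoc, ih _ (fun k => hi k.succ), mul_sum]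
    refine sum_congr rfl fun m _ => ?_
    simp [oprod_succ (n := n), List.ofFn_succ, cFwd, mul_assoc]

theorem oprod_exp_mul_exp_eq_sum_strictLower {d : ℕ} (i : Fin d → 𝔸) (hi : ∀ l, i l ^ 2 = -1)
    (ρ σ : Fin d → ℝ) :
    oprod (fun l => exp (-(ρ l • i l)) * exp (-(σ l • i l))) =
      ∑ J ∈ strictLowerTriangular d,
        oprod (fun l => cBwd (((List.finRange d).filter (fun k => k < l)).map
          fun k => (i k, J l k)) (exp (-(ρ l • i l)))) *
        oprod (fun l => exp (-((-1 : ℝ) ^ (∑ r, (J r l : ℕ)) • σ l • i l))) := by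
  induction d with
  | zero => simp [oprod, strictLowerTriangular]
  | succ n ih =>
    rw [oprod_castSucc, ih _ (fun l => hi _), sum_strictLowerTriangular_succ, sum_mul]
    refine sum_congr rfl fun J _ => ?_
    -- `exp (-a_n)` moves left past the `exp (-b_k)`, split along the `i_k`: the last row of `J`
    have hmove := oprod_exp_mul_eq_sum (fun l => i l.castSucc) (fun l => hi _)
      (fun l => (-1) ^ (∑ r, (J r l : ℕ)) * σ l.castSucc) (exp (-(ρ (.last n) • i (.last n))))
    simp only [mul_smul] at hmove
    rw [mul_assoc, ← mul_assoc _ (exp _), hmove, sum_mul, mul_sum]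
    refine sum_congr rfl fun m _ => ?_
    have hcol : ∀ k : Fin n,
        ∑ r, (addLastRow J m r k.castSucc : ℕ) = (m k : ℕ) + ∑ r, (J r k : ℕ) := by
      simp [addLastRow, Fin.sum_univ_castSucc, add_comm]
    have hlast : ∑ r, (addLastRow J m r (Fin.last n) : ℕ) = 0 := by
      simp [addLastRow, Fin.sum_univ_castSucc]
    rw [oprod_castSucc, oprod_castSucc (fun l => exp _)]
    simp only [hcol, hlast]
    simp [List.filter_finRange_lt_castSucc, List.filter_finRange_lt_last,
      List.ofFn_eq_map, Function.comp_def, pow_add, mul_smul, mul_assoc, addLastRow]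

theorem oprod_exp_mul_exp_eq_sum_strictUpper {d : ℕ} (i : Fin d → 𝔸) (hi : ∀ l, i l ^ 2 = -1)
    (ρ σ : Fin d → ℝ) :
    oprod (fun l => exp (-(ρ l • i l)) * exp (-(σ l • i l))) =
      ∑ J ∈ strictUpperTriangular d,
        oprod (fun l => exp (-((-1 : ℝ) ^ (∑ r, (J r l : ℕ)) • ρ l • i l))) *
        oprod (fun l => cFwd (((List.finRange d).filter (fun k => l < k)).map
          fun k => (i k, J l k)) (exp (-(σ l • i l)))) := by
  induction d with
  | zero => simp [oprod, strictUpperTriangular]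
  | succ n ih =>
    rw [oprod_succ, ih _ (fun l => hi _), sum_strictUpperTriangular_succ, mul_sum]
    refine sum_congr rfl fun J _ => ?_
    -- `exp (-b_0)` moves right past the `exp (-a_k)`, split along the `i_k`: the first row of `J`
    have hmove := mul_oprod_exp_eq_sum (fun l => i l.succ) (fun l => hi _)
      (fun l => (-1) ^ (∑ r, (J r l : ℕ)) * ρ l.succ) (exp (-(σ 0 • i 0)))
    simp only [mul_smul] at hmove
    rw [← mul_assoc, mul_assoc (exp _), hmove, mul_sum, sum_mul]
    refine sum_congr rfl fun m _ => ?_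
    have hcol : ∀ k : Fin n,
        ∑ r, (addFirstRow J m r k.succ : ℕ) = (m k : ℕ) + ∑ r, (J r k : ℕ) := by
      simp [addFirstRow, Fin.sum_univ_succ]
    have hzero : ∑ r, (addFirstRow J m r 0 : ℕ) = 0 := by
      simp [addFirstRow, Fin.sum_univ_succ]
    rw [oprod_succ, oprod_succ (fun l => cFwd _ _)]
    simp only [hcol, hzero]
    simp [List.filter_finRange_succ_lt, List.filter_finRange_zero_lt,
      List.ofFn_eq_map, Function.comp_def, pow_add, mul_smul, mul_assoc, addFirstRow]

end Exp

/-- Splitting a product of exponentials of sums `exp(−(a_l+b_l))`, `a_l = ρ_l i_l`,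
`b_l = σ_l i_l`, `i_l² = −1`, into parts depending only on the `a`'s and only on the `b`'s,
via strictly lower (resp. upper) triangular sign-bookkeeping matrices. -/
theorem prod_exp_add_split [NormedRing 𝔸] [NormedAlgebra ℝ 𝔸] [CompleteSpace 𝔸]
    {d : ℕ} (i : Fin d → 𝔸) (hi : ∀ l, i l ^ 2 = -1)
    (ρ σ : Fin d → ℝ) :
    (oprod (fun l => NormedSpace.exp (-(ρ l • i l + σ l • i l))) =
      ∑ j : Fin d → Fin 2,
        ∑ J ∈ Finset.univ.filter
            (fun J : Fin d → Fin d → Fin 2 =>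
              (∀ l k : Fin d, l ≤ k → J l k = 0) ∧
              (∀ c : Fin d, (∑ l, ((J l c : ℕ) : ZMod 2)) = ((j c : ℕ) : ZMod 2))),
          oprod (fun l =>
              cBwd (((List.finRange d).filter (fun k => k < l)).map (fun k => (i k, J l k)))
                (NormedSpace.exp (-(ρ l • i l)))) *
            oprod (fun l =>
              NormedSpace.exp (-((-1 : ℝ) ^ ((j l : ℕ)) • (σ l • i l))))) ∧
    (oprod (fun l => NormedSpace.exp (-(ρ l • i l + σ l • i l))) =
      ∑ j : Fin d → Fin 2,
        ∑ J ∈ Finset.univ.filter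
            (fun J : Fin d → Fin d → Fin 2 =>
              (∀ l k : Fin d, k ≤ l → J l k = 0) ∧
              (∀ c : Fin d, (∑ l, ((J l c : ℕ) : ZMod 2)) = ((j c : ℕ) : ZMod 2))),
          oprod (fun l =>
              NormedSpace.exp (-((-1 : ℝ) ^ ((j l : ℕ)) • (ρ l • i l)))) *
            oprod (fun l =>
              cFwd (((List.finRange d).filter (fun k => l < k)).map (fun k => (i k, J l k)))
                (NormedSpace.exp (-(σ l • i l))))) := by
  have hsign : ∀ (j : Fin d → Fin 2) (J : Fin d → Fin d → Fin 2),
      (∀ c, (∑ l, ((J l c : ℕ) : ZMod 2)) = ((j c : ℕ) : ZMod 2)) →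
        ∀ c, (-1 : ℝ) ^ (j c : ℕ) = (-1) ^ ∑ r, (J r c : ℕ) := fun j J hJ c =>
    neg_one_pow_eq_of_natCast_zmod_two_eq (by push_cast; exact (hJ c).symm)
  simp only [exp_add_smul_eq_mul]
  refine ⟨(oprod_exp_mul_exp_eq_sum_strictLower i hi ρ σ).trans
      (sum_sum_filter_colParity _ _ _ fun j J hJ => ?_).symm,
    (oprod_exp_mul_exp_eq_sum_strictUpper i hi ρ σ).trans
      (sum_sum_filter_colParity _ _ _ fun j J hJ => ?_).symm⟩
  · simp only [hsign j J hJ]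
  · simp only [hsign j J hJ]
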